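/- arXiv:2007.11861 — 2 statements merged into one kernel-verified Lean document; each statement's English description precedes it below -/
import Mathlib

section
/- Let P = (x_i) be a sequence in [0,1), let f be an interval exchange transformation of [0,1) with n intervals, and let P* = (f(x_i)). Then for every N, the star-discrepancies satisfy D*_N(P)/n ≤ D*_N(P*) ≤ n · D*_N(P). -/
open Set Finset

/-- Star-discrepancy of the first `N` points of a sequence in `[0,1)`. -/
noncomputable def starDisc (N : ℕ) (x : ℕ → ℝ) : ℝ :=
  sSup {d : ℝ | ∃ a ∈ Set.Icc (0:ℝ) 1,
    d = |(((Finset.range N).filter (fun i => x i < a)).card : ℝ) / N - a|}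

/-- Star-discrepancy of a finite point set in `[0,1)`. -/
noncomputable def starDiscP (N : ℕ) (x : Fin N → ℝ) : ℝ :=
  sSup {d : ℝ | ∃ a ∈ Set.Icc (0:ℝ) 1,
    d = |((Finset.univ.filter (fun i => x i < a)).card : ℝ) / N - a|}

/-- A sequence in `[0,1)` is a low-discrepancy sequence if `D_N^* = O(log N / N)`. -/
def LowDisc (x : ℕ → ℝ) : Prop :=
  ∃ C : ℝ, 0 < C ∧ ∀ N : ℕ, 2 ≤ N → starDisc N x ≤ C * Real.log N / N

/-- `f` is an interval exchange transformation of `[0,1)` with `n` intervals: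
a bijection of `[0,1)` which is a translation on each of `n` consecutive subintervals. -/
def IsIET (n : ℕ) (f : ℝ → ℝ) : Prop :=
  Set.BijOn f (Set.Ico 0 1) (Set.Ico 0 1) ∧
  ∃ Λ : Fin (n+1) → ℝ, Λ 0 = 0 ∧ Λ (Fin.last n) = 1 ∧ StrictMono Λ ∧
    ∀ i : Fin n, ∃ c : ℝ, ∀ x ∈ Set.Ico (Λ i.castSucc) (Λ i.succ), f x = x + c

/-!
The pieces `I_j = [Λ_j, Λ_{j+1})` of `f` and their images `J_j = I_j + c_j` both partition
`[0,1)`, and `f⁻¹` translates each `J_j` back onto `I_j`; so both inequalities are instances of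
`D*_N(y) ≤ n · D*_N(x)` for `y` obtained from `x` by translating the pieces of one partition onto
those of another.

Write `E(t) = #{i < N : x_i < t}/N - t`. For `a ∈ [0,1]`, `y_i < a` iff `x_i ∈ [Λ_j, w_j)` for
the piece `I_j ∋ x_i`, where `w_j` is `a - c_j` clamped to `[Λ_j, Λ_{j+1}]`; since the `J_j`
partition `[0,1)`, the lengths `w_j - Λ_j` add up to `a`. Hence the local discrepancy of `y` at `a`
is `∑_j (E(w_j) - E(Λ_j))`. Only the piece whose image contains `a` is cut strictly inside, so
after cancelling shared endpoints (and using `E(0) = E(1) = 0`) at most `n - 1` breakpoints `Λ_j`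
and one cut point survive, each contributing at most `D*_N(x)`.
-/

open Function

structure IsIcoPartition {ι : Type*} (e r : ι → ℝ) : Prop where
  lt : ∀ j, e j < r j
  pairwiseDisjoint : Pairwise (Disjoint on fun j => Set.Ico (e j) (r j))
  iUnion_eq : ⋃ j, Set.Ico (e j) (r j) = Set.Ico 0 1

namespace IsIcoPartition

variable {ι : Type*} {e r : ι → ℝ}

theorem subset_Ico (h : IsIcoPartition e r) (j : ι) : Set.Ico (e j) (r j) ⊆ Set.Ico 0 1 :=
  h.iUnion_eq ▸ subset_iUnion (fun j => Set.Ico (e j) (r j)) j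

theorem nonneg_left (h : IsIcoPartition e r) (j : ι) : 0 ≤ e j :=
  ((Ico_subset_Ico_iff (h.lt j)).1 (h.subset_Ico j)).1

theorem right_le_one (h : IsIcoPartition e r) (j : ι) : r j ≤ 1 :=
  ((Ico_subset_Ico_iff (h.lt j)).1 (h.subset_Ico j)).2

theorem exists_mem (h : IsIcoPartition e r) {t : ℝ} (ht : t ∈ Set.Ico 0 1) :
    ∃ j, t ∈ Set.Ico (e j) (r j) :=
  mem_iUnion.1 (h.iUnion_eq ▸ ht)

theorem eq_of_mem (h : IsIcoPartition e r) {t : ℝ} {j k : ι} (hj : t ∈ Set.Ico (e j) (r j))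
    (hk : t ∈ Set.Ico (e k) (r k)) : j = k := by
  by_contra hjk
  exact Set.disjoint_left.1 (h.pairwiseDisjoint hjk) hj hk

theorem exists_left_eq_zero (h : IsIcoPartition e r) : ∃ j, e j = 0 := by
  obtain ⟨j, hj⟩ := h.exists_mem (left_mem_Ico.2 zero_lt_one)
  exact ⟨j, le_antisymm hj.1 (h.nonneg_left j)⟩

theorem exists_left_eq_right (h : IsIcoPartition e r) {j : ι} (hj : r j < 1) :
    ∃ k, e k = r j := by
  obtain ⟨k, hk⟩ := h.exists_mem ⟨(h.nonneg_left j).trans (h.lt j).le, hj⟩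
  have hkj : k ≠ j := fun hkj => (hkj ▸ hk.2).false
  have hdisj := Set.Ico_disjoint_Ico.1 (h.pairwiseDisjoint hkj)
  rw [min_eq_right hk.2.le] at hdisj
  exact ⟨k, le_antisymm hk.1 ((le_max_iff.1 hdisj).resolve_right (h.lt j).not_ge)⟩

/-- `max (e j) (min (r j) a) - e j` is the length of `[e j, r j) ∩ [0, a)`. -/
theorem sum_max_min_sub [Fintype ι] (h : IsIcoPartition e r) {a : ℝ} (ha : a ∈ Set.Icc 0 1) :
    ∑ j, (max (e j) (min (r j) a) - e j) = a := by
  have hunion : ⋃ j, Set.Ico (e j) (min (r j) a) = Set.Ico 0 a := by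
    simp_rw [← Ico_inter_Iio, ← iUnion_inter, h.iUnion_eq, Ico_inter_Iio, min_eq_right ha.2]
  have hdisj : Pairwise (Disjoint on fun j => Set.Ico (e j) (min (r j) a)) :=
    pairwise_disjoint_mono h.pairwiseDisjoint fun j => Ico_subset_Ico_right (min_le_left _ _)
  have hvol := congrArg (fun s => (MeasureTheory.volume s).toReal) hunion
  simp only [MeasureTheory.measure_iUnion hdisj (fun _ => measurableSet_Ico), tsum_fintype,
    Real.volume_Ico, ENNReal.toReal_sum (fun _ _ => ENNReal.ofReal_ne_top),
    ENNReal.toReal_ofReal', sub_zero, max_eq_left ha.1] at hvol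
  refine (sum_congr rfl fun j _ => ?_).trans hvol
  rw [← max_sub_sub_right, sub_self, max_comm]

theorem translate (h : IsIcoPartition e r) {f : ℝ → ℝ} {c : ι → ℝ}
    (hf : BijOn f (Set.Ico 0 1) (Set.Ico 0 1)) (hc : ∀ j, ∀ t ∈ Set.Ico (e j) (r j), f t = t + c j) :
    IsIcoPartition (e + c) (r + c) := by
  have hpre : ∀ j z, z ∈ Set.Ico ((e + c) j) ((r + c) j) → z - c j ∈ Set.Ico (e j) (r j) :=
    fun j z hz => sub_mem_Ico_iff_left.2 hz
  have hf_sub : ∀ j z, z ∈ Set.Ico ((e + c) j) ((r + c) j) → f (z - c j) = z := fun j z hz => by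
    rw [hc j _ (hpre j z hz), sub_add_cancel]
  refine ⟨fun j => add_lt_add_left (h.lt j) _, fun j k hjk => ?_, ?_⟩
  · refine Set.disjoint_left.2 fun z hzj hzk => hjk ?_
    have hsub : z - c j = z - c k := hf.injOn (h.subset_Ico j (hpre j z hzj))
      (h.subset_Ico k (hpre k z hzk)) ((hf_sub j z hzj).trans (hf_sub k z hzk).symm)
    exact h.eq_of_mem (hpre j z hzj) (hsub ▸ hpre k z hzk)
  · ext z
    refine ⟨fun hz => ?_, fun hz => ?_⟩
    · obtain ⟨j, hj⟩ := mem_iUnion.1 hz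
      exact hf_sub j z hj ▸ hf.mapsTo (h.subset_Ico j (hpre j z hj))
    · obtain ⟨t, ht, rfl⟩ := hf.surjOn hz
      obtain ⟨j, hj⟩ := h.exists_mem ht
      exact mem_iUnion.2 ⟨j, by rw [hc j t hj]; exact sub_mem_Ico_iff_left.1 (by simpa using hj)⟩

theorem eq_add_neg_of_apply_mem (hI : IsIcoPartition e r) {c : ι → ℝ}
    (hJ : IsIcoPartition (e + c) (r + c)) {f : ℝ → ℝ}
    (hc : ∀ j, ∀ t ∈ Set.Ico (e j) (r j), f t = t + c j) {t : ℝ} (ht : t ∈ Set.Ico 0 1) {j : ι}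
    (hj : f t ∈ Set.Ico ((e + c) j) ((r + c) j)) : t = f t + -c j := by
  obtain ⟨k, hk⟩ := hI.exists_mem ht
  have hfk := hc k t hk
  have hfk_mem : f t ∈ Set.Ico ((e + c) k) ((r + c) k) :=
    hfk ▸ ⟨add_le_add_left hk.1 _, add_lt_add_left hk.2 _⟩
  obtain rfl := hJ.eq_of_mem hj hfk_mem
  rw [hfk, add_neg_cancel_right]

end IsIcoPartition

theorem isIcoPartition_of_strictMono {n : ℕ} {Λ : Fin (n + 1) → ℝ} (h0 : Λ 0 = 0)
    (h1 : Λ (Fin.last n) = 1) (hΛ : StrictMono Λ) :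
    IsIcoPartition (fun j : Fin n => Λ j.castSucc) (fun j => Λ j.succ) := by
  refine ⟨fun j => hΛ j.castSucc_lt_succ, ?_, ?_⟩
  · refine (pairwise_disjoint_on _).2 fun j k hjk => Set.Ico_disjoint_Ico.2 ?_
    exact (min_le_left _ _).trans
      (le_max_of_le_right (hΛ.monotone (Fin.succ_le_castSucc_iff.2 hjk)))
  refine (iUnion_subset fun j => Set.Ico_subset_Ico ?_ ?_).antisymm ?_
  · exact h0 ▸ hΛ.monotone (Fin.zero_le _)
  · exact h1 ▸ hΛ.monotone (Fin.le_last _)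
  · set a : ℕ → ℝ := fun k => Λ ⟨min k n, Nat.lt_succ_of_le (min_le_right k n)⟩
    intro t ht
    have ha0 : a 0 = 0 := by simpa [a] using h0
    have han : a n = 1 := by simpa [a, Fin.last] using h1
    obtain ⟨k, hk, hkt⟩ := mem_iUnion₂.1 (Ico_subset_biUnion_Ico n a (ha0 ▸ han ▸ ht))
    rw [Finset.mem_range] at hk
    refine mem_iUnion.2 ⟨⟨k, hk⟩, ?_⟩
    simpa [a, min_eq_left hk.le, min_eq_left (Nat.succ_le_of_lt hk)] using hkt

section LocalDiscrepancy

variable {N : ℕ} {x : ℕ → ℝ}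

noncomputable def localDisc (N : ℕ) (x : ℕ → ℝ) (t : ℝ) : ℝ :=
  (#{i ∈ range N | x i < t} : ℝ) / N - t

theorem abs_localDisc_le_starDisc {t : ℝ} (ht : t ∈ Set.Icc 0 1) :
    |localDisc N x t| ≤ starDisc N x := by
  refine le_csSup ⟨1, ?_⟩ ⟨t, ht, rfl⟩
  rintro _ ⟨a, ha, rfl⟩
  refine abs_sub_le_of_nonneg_of_le (by positivity) (div_le_one_of_le₀ ?_ (Nat.cast_nonneg N))
    ha.1 ha.2
  exact_mod_cast (card_filter_le _ _).trans (card_range N).le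

theorem starDisc_nonneg : 0 ≤ starDisc N x :=
  (abs_nonneg _).trans (abs_localDisc_le_starDisc (left_mem_Icc.2 zero_le_one))

theorem starDisc_le_of_forall {B : ℝ} (h : ∀ t ∈ Set.Icc 0 1, |localDisc N x t| ≤ B) :
    starDisc N x ≤ B :=
  csSup_le ⟨_, 0, left_mem_Icc.2 zero_le_one, rfl⟩ fun _ ⟨t, ht, hd⟩ => hd ▸ h t ht

theorem starDisc_zero_eq (x y : ℕ → ℝ) : starDisc 0 x = starDisc 0 y := by
  simp [starDisc]

theorem localDisc_zero (hx : ∀ i, 0 ≤ x i) : localDisc N x 0 = 0 := by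
  simp [localDisc, fun i => (hx i).not_gt]

theorem localDisc_one (hN : N ≠ 0) (hx : ∀ i, x i < 1) : localDisc N x 1 = 0 := by
  simp [localDisc, hx, hN]

theorem card_filter_mem_Ico (s : Finset ℕ) {u v : ℝ} (huv : u ≤ v) :
    (#{i ∈ s | x i ∈ Set.Ico u v} : ℝ) = #{i ∈ s | x i < v} - #{i ∈ s | x i < u} := by
  have hsub : {i ∈ s | x i < u} ⊆ {i ∈ s | x i < v} :=
    monotone_filter_right s fun i _ (hi : x i < u) => hi.trans_le huv
  have hdiff : {i ∈ s | x i ∈ Set.Ico u v} = {i ∈ s | x i < v} \ {i ∈ s | x i < u} := by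
    ext i
    simp only [mem_filter, Finset.mem_sdiff, Set.mem_Ico, not_and, not_lt]
    tauto
  rw [hdiff, card_sdiff_of_subset hsub, Nat.cast_sub (Finset.card_le_card hsub)]

end LocalDiscrepancy

section Clamp

variable {α : Type*} [LinearOrder α] {e r s t : α}

theorem lt_max_min_iff (ht : t ∈ Set.Ico e r) : t < max e (min r s) ↔ t < s := by
  simp [ht.1.not_gt, ht.2]

theorem max_min_eq_or_eq (hs : s ∉ Set.Ico e r) : max e (min r s) = e ∨ max e (min r s) = r := by
  rw [Set.mem_Ico, not_and_or, not_le, not_lt] at hs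
  rcases hs with hs | hs
  · exact .inl (max_eq_left ((min_le_right r s).trans hs.le))
  · rw [min_eq_left hs]
    exact max_choice e r

end Clamp

section DisjointIco

variable {ι α : Type*} [LinearOrder α] {s : Set ι} {u v : ι → α}

theorem injOn_left_of_pairwise_disjoint_Ico
    (hd : s.Pairwise (Disjoint on fun j => Set.Ico (u j) (v j))) (huv : ∀ j ∈ s, u j < v j) :
    InjOn u s := by
  intro j hj k hk hjk
  by_contra hne
  have := Set.Ico_disjoint_Ico.1 (hd hj hk hne)
  rw [hjk, max_self] at this
  exact this.not_gt (lt_min (hjk ▸ huv j hj) (huv k hk))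

theorem injOn_right_of_pairwise_disjoint_Ico
    (hd : s.Pairwise (Disjoint on fun j => Set.Ico (u j) (v j))) (huv : ∀ j ∈ s, u j < v j) :
    InjOn v s := by
  intro j hj k hk hjk
  by_contra hne
  have := Set.Ico_disjoint_Ico.1 (hd hj hk hne)
  rw [hjk, min_self] at this
  exact this.not_gt (max_lt (hjk ▸ huv j hj) (huv k hk))

end DisjointIco

theorem abs_sum_sub_le_sum_abs {ι α : Type*} [DecidableEq α] {s : Finset ι} {t : Finset α}
    {u v : ι → α} (g : α → ℝ) (hu : InjOn u s) (hv : InjOn v s)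
    (hut : ∀ j ∈ s, g (u j) ≠ 0 → u j ∈ t) (hvt : ∀ j ∈ s, g (v j) ≠ 0 → v j ∈ t) :
    |∑ j ∈ s, (g (v j) - g (u j))| ≤ ∑ b ∈ t, |g b| := by
  have hsum_eq : ∀ w : ι → α, InjOn w s → (∀ j ∈ s, g (w j) ≠ 0 → w j ∈ t) →
      ∑ j ∈ s, g (w j) = ∑ b ∈ t, if b ∈ s.image w then g b else 0 := by
    intro w hw hwt
    rw [← sum_filter, filter_mem_eq_inter, ← sum_image hw]
    refine (sum_subset inter_subset_right fun b hb hbt => ?_).symm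
    obtain ⟨j, hj, rfl⟩ := mem_image.1 hb
    by_contra hne
    exact hbt (mem_inter.2 ⟨hwt j hj hne, hb⟩)
  rw [sum_sub_distrib, hsum_eq v hv hvt, hsum_eq u hu hut, ← sum_sub_distrib]
  refine (abs_sum_le_sum_abs _ _).trans (sum_le_sum fun b _ => ?_)
  split_ifs <;> simp

namespace IsIcoPartition

variable {ι : Type*} [Fintype ι] {e r : ι → ℝ}

theorem card_insert_erase_zero_le (h : IsIcoPartition e r) (b : ℝ) :
    #(insert b ((Finset.univ.image e).erase 0)) ≤ Fintype.card ι := by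
  obtain ⟨j0, hj0⟩ := h.exists_left_eq_zero
  have h0 : (0 : ℝ) ∈ Finset.univ.image e := hj0 ▸ mem_image_of_mem e (mem_univ j0)
  calc #(insert b ((Finset.univ.image e).erase 0))
      ≤ #((Finset.univ.image e).erase 0) + 1 := card_insert_le _ _
    _ = #(Finset.univ.image e) := by
        rw [card_erase_of_mem h0, Nat.sub_add_cancel (card_pos.2 ⟨0, h0⟩)]
    _ ≤ Fintype.card ι := card_image_le.trans_eq card_univ

theorem abs_sum_sub_le_card_mul (h : IsIcoPartition e r) {g : ℝ → ℝ} {D : ℝ} (hg0 : g 0 = 0)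
    (hg1 : g 1 = 0) (hgD : ∀ b ∈ Set.Icc 0 1, |g b| ≤ D) {w : ι → ℝ} (hew : ∀ j, e j ≤ w j)
    (hwr : ∀ j, w j ≤ r j) {p : ι} (hp : ∀ j ≠ p, w j = e j ∨ w j = r j) :
    |∑ j, (g (w j) - g (e j))| ≤ Fintype.card ι * D := by
  classical
  set T : Finset ι := {j | e j < w j}
  set t : Finset ℝ := insert (w p) ((Finset.univ.image e).erase 0)
  have hT : ∀ j ∈ T, e j < w j := fun j hj => (mem_filter.1 hj).2
  have hdisj : (T : Set ι).Pairwise (Disjoint on fun j => Set.Ico (e j) (w j)) :=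
    fun j _ k _ hjk => (h.pairwiseDisjoint hjk).mono (Set.Ico_subset_Ico_right (hwr j))
      (Set.Ico_subset_Ico_right (hwr k))
  have he_mem : ∀ j, e j ≠ 0 → e j ∈ t := fun j hj =>
    mem_insert_of_mem (mem_erase.2 ⟨hj, mem_image_of_mem e (mem_univ j)⟩)
  have hw_mem : ∀ j ∈ T, g (w j) ≠ 0 → w j ∈ t := by
    intro j hj hg
    obtain rfl | hjp := eq_or_ne j p
    · exact mem_insert_self _ _
    have hwj : w j = r j := (hp j hjp).resolve_left (hT j hj).ne'
    have hr1 : r j < 1 := (h.right_le_one j).lt_of_ne fun hr => hg (by rw [hwj, hr, hg1])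
    obtain ⟨k, hk⟩ := h.exists_left_eq_right hr1
    rw [hwj, ← hk]
    exact he_mem k (hk ▸ ((h.nonneg_left j).trans_lt (h.lt j)).ne')
  have hD : 0 ≤ D := (abs_nonneg _).trans (hgD 0 (left_mem_Icc.2 zero_le_one))
  have ht_Icc : ∀ b ∈ t, b ∈ Set.Icc (0 : ℝ) 1 := by
    intro b hb
    rcases mem_insert.1 hb with rfl | hb
    · exact ⟨(h.nonneg_left p).trans (hew p), (hwr p).trans (h.right_le_one p)⟩
    obtain ⟨j, -, rfl⟩ := mem_image.1 (mem_of_mem_erase hb)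
    exact ⟨h.nonneg_left j, (h.lt j).le.trans (h.right_le_one j)⟩
  calc |∑ j, (g (w j) - g (e j))| = |∑ j ∈ T, (g (w j) - g (e j))| := by
        rw [sum_filter_of_ne fun j _ hne => (hew j).lt_of_ne fun hj => hne (by rw [hj, sub_self])]
    _ ≤ ∑ b ∈ t, |g b| :=
        abs_sum_sub_le_sum_abs g
          (injOn_left_of_pairwise_disjoint_Ico hdisj hT)
          (injOn_right_of_pairwise_disjoint_Ico hdisj hT)
          (fun j _ hg => he_mem j fun hj => hg (by rw [hj, hg0])) hw_mem
    _ ≤ #t • D := sum_le_card_nsmul _ _ _ fun b hb => hgD b (ht_Icc b hb)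
    _ ≤ Fintype.card ι * D := by
        rw [nsmul_eq_mul]
        exact mul_le_mul_of_nonneg_right (by exact_mod_cast h.card_insert_erase_zero_le _) hD

end IsIcoPartition

section PieceTranslation

variable {ι : Type*} [Fintype ι] {e r c : ι → ℝ} {x y : ℕ → ℝ}

theorem IsIcoPartition.localDisc_eq_sum (h : IsIcoPartition e r) (hx : ∀ i, x i ∈ Set.Ico 0 1)
    {w : ι → ℝ} (hew : ∀ j, e j ≤ w j) (hwr : ∀ j, w j ≤ r j) {a : ℝ}
    (hy : ∀ i j, x i ∈ Set.Ico (e j) (r j) → (y i < a ↔ x i < w j))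
    (hsum : ∑ j, (w j - e j) = a) (N : ℕ) :
    localDisc N y a = ∑ j, (localDisc N x (w j) - localDisc N x (e j)) := by
  classical
  have hfilter : {i ∈ range N | y i < a} =
      Finset.univ.biUnion fun j => {i ∈ range N | x i ∈ Set.Ico (e j) (w j)} := by
    ext i
    simp only [mem_filter, Finset.mem_biUnion, Finset.mem_univ, true_and]
    constructor
    · rintro ⟨hi, hya⟩
      obtain ⟨j, hj⟩ := h.exists_mem (hx i)
      exact ⟨j, hi, hj.1, (hy i j hj).1 hya⟩
    · rintro ⟨j, hi, hj⟩
      exact ⟨hi, (hy i j (Set.Ico_subset_Ico_right (hwr j) hj)).2 hj.2⟩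
  have hdisj : ((Finset.univ : Finset ι) : Set ι).PairwiseDisjoint
      fun j => {i ∈ range N | x i ∈ Set.Ico (e j) (w j)} :=
    fun j _ k _ hjk => Finset.disjoint_left.2 fun i hij hik => hjk <| h.eq_of_mem
      (Set.Ico_subset_Ico_right (hwr j) (mem_filter.1 hij).2)
      (Set.Ico_subset_Ico_right (hwr k) (mem_filter.1 hik).2)
  rw [localDisc, hfilter, card_biUnion hdisj, Nat.cast_sum, sum_div, ← hsum, ← sum_sub_distrib]
  refine sum_congr rfl fun j _ => ?_
  rw [card_filter_mem_Ico _ (hew j), localDisc, localDisc]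
  ring

theorem starDisc_le_card_mul (hI : IsIcoPartition e r) (hJ : IsIcoPartition (e + c) (r + c))
    (hx : ∀ i, x i ∈ Set.Ico 0 1) (hy : ∀ i j, x i ∈ Set.Ico (e j) (r j) → y i = x i + c j)
    (N : ℕ) : starDisc N y ≤ Fintype.card ι * starDisc N x := by
  obtain ⟨j0, -⟩ := hI.exists_left_eq_zero
  -- for `N = 0` the count is `0 / 0 = 0`, so `localDisc 0 x 1 = -1` and the argument below fails
  obtain rfl | hN := eq_or_ne N 0
  · rw [starDisc_zero_eq y x]
    exact le_mul_of_one_le_left starDisc_nonneg (by exact_mod_cast Fintype.card_pos_iff.2 ⟨j0⟩)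
  refine starDisc_le_of_forall fun a ha => ?_
  set w : ι → ℝ := fun j => max (e j) (min (r j) (a - c j))
  have hew : ∀ j, e j ≤ w j := fun j => le_max_left _ _
  have hwr : ∀ j, w j ≤ r j := fun j => max_le (hI.lt j).le (min_le_left _ _)
  have hsum : ∑ j, (w j - e j) = a := by
    refine (sum_congr rfl fun j _ => ?_).trans (hJ.sum_max_min_sub ha)
    have hmin : min (r j + c j) a = min (r j) (a - c j) + c j := by
      rw [← min_add_add_right, sub_add_cancel]
    simp only [w, Pi.add_apply, hmin, max_add_add_right, add_sub_add_right_eq_sub]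
  obtain ⟨p, hp⟩ : ∃ p, ∀ j ≠ p, w j = e j ∨ w j = r j := by
    have hw : ∀ j, a ∉ Set.Ico ((e + c) j) ((r + c) j) → w j = e j ∨ w j = r j :=
      fun j haj => max_min_eq_or_eq (mt sub_mem_Ico_iff_left.1 haj)
    by_cases ha' : ∃ p, a ∈ Set.Ico ((e + c) p) ((r + c) p)
    · obtain ⟨p, hp⟩ := ha'
      exact ⟨p, fun j hjp => hw j fun haj => hjp (hJ.eq_of_mem haj hp)⟩
    · exact ⟨j0, fun j _ => hw j fun haj => ha' ⟨j, haj⟩⟩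
  rw [hI.localDisc_eq_sum hx hew hwr
    (fun i j hij => by rw [hy i j hij, ← lt_sub_iff_add_lt, lt_max_min_iff hij]) hsum]
  exact hI.abs_sum_sub_le_card_mul (localDisc_zero fun i => (hx i).1)
    (localDisc_one hN fun i => (hx i).2) (fun b hb => abs_localDisc_le_starDisc hb) hew hwr hp

end PieceTranslation

/-- For a sequence `P` in `[0,1)` and an IET `f` with `n` intervals,
`D_N^*(P)/n ≤ D_N^*(f(P)) ≤ n · D_N^*(P)` for every `N`. -/
theorem starDisc_conj_bounds (n : ℕ) (f : ℝ → ℝ) (hf : IsIET n f)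
    (x : ℕ → ℝ) (hx : ∀ i, x i ∈ Set.Ico (0:ℝ) 1) (N : ℕ) :
    starDisc N x / n ≤ starDisc N (fun i => f (x i)) ∧
      starDisc N (fun i => f (x i)) ≤ n * starDisc N x := by
  obtain ⟨hbij, Λ, hΛ0, hΛ1, hΛ, hpieces⟩ := hf
  choose c hc using hpieces
  set e : Fin n → ℝ := fun j => Λ j.castSucc
  set r : Fin n → ℝ := fun j => Λ j.succ
  have hI : IsIcoPartition e r := isIcoPartition_of_strictMono hΛ0 hΛ1 hΛ
  have hJ := hI.translate hbij hc
  have hI' : IsIcoPartition (e + c + -c) (r + c + -c) := by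
    rwa [add_neg_cancel_right, add_neg_cancel_right]
  have hn : (0 : ℝ) < n := by
    obtain ⟨j, -⟩ := hI.exists_left_eq_zero
    exact_mod_cast j.pos
  refine ⟨(div_le_iff₀' hn).2 ?_, ?_⟩
  · simpa using starDisc_le_card_mul hJ hI' (fun i => hbij.mapsTo (hx i))
      (fun i _ => hI.eq_add_neg_of_apply_mem hJ hc (hx i)) N
  · simpa using starDisc_le_card_mul hI hJ hx (fun i j => hc j (x i)) N
end

section
/- Let N ≥ 2 and define x_i = 1/N + (i−1)(N−2)/(N(N−1)) for i = 1,…,N. Then the star-discrepancy of the point set {x_1,…,x_N} equals 1/N. Moreover, if f: [0,1) → [0,1) is the interval exchange transformation that swaps the two intervals [0,1/N) and [1/N,1) (i.e. f(x) = x + (N−1)/N for x ∈ [0,1/N) and f(x) = x − 1/N otherwise), then the star-discrepancy of {f(x_1),…,f(x_N)} equals 2/N. -/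
/-!
Let `y₀ ≤ ⋯ ≤ y_{N-1}`. The count `#{i | yᵢ < a}` is `k` exactly when `y_{k-1} < a ≤ y_k`,
so `|#{i | yᵢ < a} / N - a| ≤ D` for every `a` as soon as each `yᵢ` lies in
`[(i + 1) / N - D, i / N + D]`. The points `xᵢ = 1/N + i (N-2)/(N(N-1))` satisfy this with
`D = 1/N`, which `a = 1/N` (no point below it) attains. The exchange shifts every `xᵢ ≥ 1/N`
down by `1/N`, giving points equally spaced from `0` to `1 - 2/N`; they satisfy it with
`D = 2/N`, approached (not attained) by `a ↓ 1 - 2/N`, where all `N` points are counted.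
-/

open Set Finset

section Counting

variable {α : Type*} [LinearOrder α] {N : ℕ} {y : Fin N → α} {a : α} {j : Fin N}

lemma Monotone.apply_lt_of_lt_card_filter (hy : Monotone y)
    (hj : (j : ℕ) < #{i | y i < a}) : y j < a := by
  by_contra! hyj
  have hsub : ({i | y i < a} : Finset (Fin N)) ⊆ Finset.Iio j := fun i hi => by
    simp only [Finset.mem_filter, Finset.mem_univ, true_and] at hi
    exact Finset.mem_Iio.2 (lt_of_not_ge fun hji => (hi.trans_le (hyj.trans (hy hji))).false)
  exact (Finset.card_le_card hsub).trans_eq (Fin.card_Iio j) |>.not_gt hj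

lemma Monotone.le_apply_of_card_filter_le (hy : Monotone y)
    (hj : #{i | y i < a} ≤ (j : ℕ)) : a ≤ y j := by
  by_contra! hyj
  have hsub : Finset.Iic j ⊆ ({i | y i < a} : Finset (Fin N)) := fun i hi => by
    simp only [Finset.mem_filter, Finset.mem_univ, true_and]
    exact (hy (Finset.mem_Iic.1 hi)).trans_lt hyj
  have := (Fin.card_Iic j).symm.trans_le (Finset.card_le_card hsub)
  omega

end Counting

section StarDiscrepancy

variable {N : ℕ} {y : Fin N → ℝ}

lemma abs_card_filter_div_sub_le_one (a : ℝ) (ha : a ∈ Icc (0 : ℝ) 1) :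
    |(#{i | y i < a} : ℝ) / N - a| ≤ 1 := by
  have hk : (#{i | y i < a} : ℝ) / N ≤ 1 := by
    rcases Nat.eq_zero_or_pos N with rfl | hN
    · simp
    · rw [div_le_one (by exact_mod_cast hN)]
      exact_mod_cast (Finset.card_le_univ _).trans_eq (Fintype.card_fin N)
  rw [abs_le]
  constructor <;> nlinarith [ha.1, ha.2, show (0 : ℝ) ≤ (#{i | y i < a} : ℝ) / N by positivity]

lemma abs_card_filter_div_sub_le_starDiscP (a : ℝ) (ha : a ∈ Icc (0 : ℝ) 1) :
    |(#{i | y i < a} : ℝ) / N - a| ≤ starDiscP N y :=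
  le_csSup ⟨1, by rintro d ⟨b, hb, rfl⟩; exact abs_card_filter_div_sub_le_one b hb⟩ ⟨a, ha, rfl⟩

lemma starDiscP_nonneg : 0 ≤ starDiscP N y :=
  (abs_nonneg _).trans (abs_card_filter_div_sub_le_starDiscP 0 (by simp))

lemma starDiscP_le_of_monotone (hN : N ≠ 0) (hy : Monotone y) {D : ℝ} (hD : 0 ≤ D)
    (hlow : ∀ i : Fin N, ((i : ℝ) + 1) / N - D ≤ y i)
    (hupp : ∀ i : Fin N, y i ≤ (i : ℝ) / N + D) : starDiscP N y ≤ D := by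
  refine csSup_le ⟨_, 0, by simp, rfl⟩ ?_
  rintro d ⟨a, ⟨ha0, ha1⟩, rfl⟩
  set k := #{i | y i < a}
  have hkN : k ≤ N := (Finset.card_le_univ _).trans_eq (Fintype.card_fin N)
  have hN' : (0 : ℝ) < N := by exact_mod_cast Nat.pos_of_ne_zero hN
  rw [abs_le]
  constructor
  · rcases hkN.lt_or_eq with hkN | hkN
    · have hle := hy.le_apply_of_card_filter_le (a := a) (j := ⟨k, hkN⟩) le_rfl
      have := hupp ⟨k, hkN⟩
      linarith
    · rw [hkN, div_self hN'.ne']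
      linarith
  · rcases Nat.eq_zero_or_eq_succ_pred k with hk0 | hk1
    · rw [hk0, Nat.cast_zero, zero_div]
      linarith
    · have hj : k.pred < N := by omega
      have hlt := hy.apply_lt_of_lt_card_filter (a := a) (j := ⟨k.pred, hj⟩) (by simp; omega)
      have hlow' := hlow ⟨k.pred, hj⟩
      have hcast : ((k.pred : ℕ) : ℝ) + 1 = k := by rw [hk1]; simp
      rw [hcast] at hlow'
      linarith

lemma le_starDiscP_of_forall_le {a : ℝ} (ha : a ∈ Icc (0 : ℝ) 1) (hy : ∀ i, a ≤ y i) :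
    a ≤ starDiscP N y := by
  have hempty : ({i | y i < a} : Finset (Fin N)) = ∅ :=
    Finset.filter_eq_empty_iff.2 fun i _ => not_lt.2 (hy i)
  have := abs_card_filter_div_sub_le_starDiscP (y := y) a ha
  rwa [hempty, Finset.card_empty, Nat.cast_zero, zero_div, zero_sub, abs_neg,
    abs_of_nonneg ha.1] at this

lemma one_sub_le_starDiscP_of_forall_le (hN : N ≠ 0) {m : ℝ} (hm : 0 ≤ m)
    (hy : ∀ i, y i ≤ m) : 1 - m ≤ starDiscP N y := by
  rw [sub_le_comm]
  refine le_of_forall_gt_imp_ge_of_dense fun a hma => ?_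
  rcases le_or_gt a 1 with ha1 | ha1
  · have hfull : ({i | y i < a} : Finset (Fin N)) = Finset.univ :=
      Finset.filter_eq_self.2 fun i _ => (hy i).trans_lt hma
    have := abs_card_filter_div_sub_le_starDiscP (y := y) a ⟨hm.trans hma.le, ha1⟩
    rw [hfull, Finset.card_univ, Fintype.card_fin, div_self (by exact_mod_cast hN),
      abs_of_nonneg (by linarith)] at this
    linarith
  · linarith [starDiscP_nonneg (y := y)]

end StarDiscrepancy

noncomputable def spacedPoints (N : ℕ) (i : Fin N) : ℝ := (i : ℝ) * (N - 2) / (N * (N - 1))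

lemma Fin.cast_val_le_sub_one {N : ℕ} (i : Fin N) : (i : ℝ) ≤ N - 1 := by
  rw [le_sub_iff_add_le]
  exact_mod_cast i.isLt

namespace spacedPoints

variable {N : ℕ}

lemma nonneg (hN : 2 ≤ N) (i : Fin N) : 0 ≤ spacedPoints N i := by
  have : (2 : ℝ) ≤ N := by exact_mod_cast hN
  unfold spacedPoints
  apply div_nonneg <;> nlinarith

lemma div_sub_eq (hN : 2 ≤ N) (i : Fin N) : (i : ℝ) / N - spacedPoints N i = i / (N * (N - 1)) := by
  have : (2 : ℝ) ≤ N := by exact_mod_cast hN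
  have : (N : ℝ) - 1 ≠ 0 := by linarith
  have : (N : ℝ) ≠ 0 := by linarith
  unfold spacedPoints
  field_simp
  ring

lemma le_div (hN : 2 ≤ N) (i : Fin N) : spacedPoints N i ≤ i / N := by
  have : (2 : ℝ) ≤ N := by exact_mod_cast hN
  have : (0 : ℝ) ≤ N - 1 := by linarith
  have : (0 : ℝ) ≤ (i : ℝ) / (N * (N - 1)) := by positivity
  linarith [div_sub_eq hN i]

lemma div_le_inv_add (hN : 2 ≤ N) (i : Fin N) : (i : ℝ) / N ≤ 1 / N + spacedPoints N i := by
  have : (2 : ℝ) ≤ N := by exact_mod_cast hN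
  have h : (i : ℝ) / (N * (N - 1)) ≤ (N - 1) / (N * (N - 1)) := by
    gcongr
    · nlinarith
    · exact i.cast_val_le_sub_one
  rw [div_mul_cancel_right₀ (by linarith), ← one_div] at h
  linarith [div_sub_eq hN i]

lemma le_sub_two_div (hN : 2 ≤ N) (i : Fin N) : spacedPoints N i ≤ (N - 2) / N := by
  have : (2 : ℝ) ≤ N := by exact_mod_cast hN
  have : (N : ℝ) - 1 ≠ 0 := by linarith
  calc spacedPoints N i ≤ (N - 1) * (N - 2) / (N * (N - 1)) := by
        have := i.cast_val_le_sub_one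
        unfold spacedPoints
        gcongr; nlinarith
    _ = (N - 2) / N := by field_simp

lemma monotone (hN : 2 ≤ N) : Monotone (spacedPoints N) := fun i j hij => by
  have : (2 : ℝ) ≤ N := by exact_mod_cast hN
  have : (0 : ℝ) ≤ N * (N - 1) := by nlinarith
  have : ((i : ℕ) : ℝ) ≤ j := by exact_mod_cast hij
  unfold spacedPoints
  gcongr

end spacedPoints

section SpacedPoints

variable {N : ℕ}

lemma starDiscP_spacedPoints (hN : 2 ≤ N) : starDiscP N (spacedPoints N) = 2 / N := by
  have hn : (2 : ℝ) ≤ N := by exact_mod_cast hN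
  have h2N : (2 : ℝ) / N = 1 / N + 1 / N := by ring
  refine le_antisymm (starDiscP_le_of_monotone (by omega) (spacedPoints.monotone hN)
    (D := 2 / N) (by positivity) (fun i => ?_) (fun i => ?_)) ?_
  · rw [add_div]
    linarith [spacedPoints.div_le_inv_add hN i]
  · linarith [spacedPoints.le_div hN i, show (0 : ℝ) < 1 / N by positivity]
  · have := one_sub_le_starDiscP_of_forall_le (by omega) (div_nonneg (by linarith) (by linarith))
      (spacedPoints.le_sub_two_div hN)
    refine le_of_eq_of_le ?_ this
    field_simp
    ring

lemma starDiscP_inv_add_spacedPoints (hN : 2 ≤ N) :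
    starDiscP N (fun i => 1 / N + spacedPoints N i) = 1 / N := by
  have hn : (2 : ℝ) ≤ N := by exact_mod_cast hN
  have h1N : (0 : ℝ) < 1 / N := by positivity
  refine le_antisymm (starDiscP_le_of_monotone (by omega) ((spacedPoints.monotone hN).const_add _)
    h1N.le (fun i => ?_) (fun i => ?_)) (le_starDiscP_of_forall_le ⟨h1N.le, ?_⟩ (fun i => ?_))
  · rw [add_div, add_sub_cancel_right]
    exact spacedPoints.div_le_inv_add hN i
  · linarith [spacedPoints.le_div hN i]
  · rw [div_le_one (by linarith)]
    linarith
  · linarith [spacedPoints.nonneg hN i]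

end SpacedPoints

/-- For `N ≥ 2` and `x_i = 1/N + (i−1)(N−2)/(N(N−1))` (here 0-indexed), the
star-discrepancy of `{x_1,…,x_N}` is `1/N`; after applying the IET swapping `[0,1/N)` and
`[1/N,1)`, the star-discrepancy becomes `2/N`. -/
theorem starDisc_sharp_two_intervals (N : ℕ) (hN : 2 ≤ N)
    (x : Fin N → ℝ) (hx : ∀ i : Fin N, x i = 1/N + (i : ℝ) * (N - 2) / (N * (N - 1)))
    (f : ℝ → ℝ)
    (hf : ∀ y : ℝ, f y = if y < 1/N then y + (N - 1)/N else y - 1/N) :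
    starDiscP N x = 1/N ∧ starDiscP N (fun i => f (x i)) = 2/N := by
  have hx' : x = fun i => 1 / N + spacedPoints N i := funext hx
  have hfx : (fun i => f (x i)) = spacedPoints N := funext fun i => by
    have : 1 / (N : ℝ) ≤ x i := by
      rw [hx']
      linarith [spacedPoints.nonneg hN i]
    rw [hf, if_neg this.not_gt, hx']
    ring
  rw [hfx, hx']
  exact ⟨starDiscP_inv_add_spacedPoints hN, starDiscP_spacedPoints hN⟩
end
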